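/- arXiv:1505.01100 — 4 statements merged into one kernel-verified Lean document; each statement's English description precedes it below -/
import Mathlib

section
/- Define Laurent polynomials Δ_k recursively by Δ_0 = 0, Δ_1 = F_{p_1}, and Δ_k = (q_{k-1}(u₁-1)(u₂-1)F_{p_k} + 1)Δ_{k-1} + (u₁u₂)^{p_{k-1}} (F_{p_k}/F_{p_{k-1}}) (Δ_{k-1} - Δ_{k-2}), where p_i, q_i are nonzero integers. Then for all n ≥ 1 and all t > n-1, the diagonal part Δ_n^[t] is zero, and moreover Δ_n^[n-1] = (∏_{i=1}^{n-1} q_i) · (-u₁)^{n-1} · ∏_{i=1}^{n} F_{p_i}. -/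
open Finset

noncomputable section

/-- Laurent polynomials in two variables `u₁, u₂` over `ℤ`. -/
abbrev L2 := AddMonoidAlgebra ℤ (ℤ × ℤ)

/-- The monomial `u₁^r * u₂^s`. -/
def mono (r s : ℤ) : L2 := AddMonoidAlgebra.single (r, s) 1

/-- The `i`-th diagonal part `P^[i]`: the sum of all monomials `a·u₁^r·u₂^s` of `P`
with `r - s = i`. -/
def diag (P : L2) (i : ℤ) : L2 := AddMonoidAlgebra.ofCoeff (Finsupp.filter (fun p => p.1 - p.2 = i) P.coeff)

/-- `F r = Σ_{i=0}^{r-1} (u₁u₂)^i` for `r > 0`, `F 0 = 0`,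
`F r = -Σ_{i=r}^{-1} (u₁u₂)^i` for `r < 0`. -/
def F (r : ℤ) : L2 :=
  if 0 < r then ∑ i ∈ range r.toNat, mono i i
  else -∑ i ∈ range (-r).toNat, mono (-(i : ℤ) - 1) (-(i : ℤ) - 1)

/-! Multiplication by `u₁^r u₂^s` shifts diagonal degrees by `r - s`, and every `F_p` has diagonal
degree `0`. Taking the `t`-th diagonal part of the recursion and cancelling the nonzero factor
`F_{p_{k-1}}` therefore shows inductively that `Δ_k` lives in diagonal degrees `≤ k - 1`, and that
in degree `k - 1` only the term `-q_{k-1} u₁ F_{p_k} Δ_{k-1}^[k-2]` survives. -/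

def diagAddHom (t : ℤ) : L2 →+ L2 where
  toFun P := diag P t
  map_zero' := congrArg AddMonoidAlgebra.ofCoeff (Finsupp.filter_zero _)
  map_add' _ _ := congrArg AddMonoidAlgebra.ofCoeff Finsupp.filter_add

section diagLinear

variable (P Q : L2) (t : ℤ)

lemma diag_zero : diag 0 t = 0 := map_zero (diagAddHom t)

lemma diag_add : diag (P + Q) t = diag P t + diag Q t := map_add (diagAddHom t) P Q

lemma diag_sub : diag (P - Q) t = diag P t - diag Q t := map_sub (diagAddHom t) P Q

lemma diag_neg : diag (-P) t = -diag P t := map_neg (diagAddHom t) P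

lemma diag_zsmul (c : ℤ) : diag (c • P) t = c • diag P t := map_zsmul (diagAddHom t) c P

lemma diag_sum {ι : Type*} (s : Finset ι) (f : ι → L2) :
    diag (∑ i ∈ s, f i) t = ∑ i ∈ s, diag (f i) t := map_sum (diagAddHom t) f s

end diagLinear

lemma diag_single (x : ℤ × ℤ) (c t : ℤ) :
    diag (AddMonoidAlgebra.single x c) t =
      if x.1 - x.2 = t then AddMonoidAlgebra.single x c else 0 := by
  unfold _root_.diag
  split_ifs with h
  · exact congrArg _ (Finsupp.filter_single_of_pos _ h)
  · exact congrArg _ (Finsupp.filter_single_of_neg _ h)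

lemma mono_mul_mono (r s r' s' : ℤ) : mono r s * mono r' s' = mono (r + r') (s + s') := by
  simp [mono]

lemma diag_mono_mul (r s : ℤ) (Q : L2) (t : ℤ) :
    diag (mono r s * Q) t = mono r s * diag Q (t - (r - s)) := by
  induction Q using AddMonoidAlgebra.induction_linear with
  | zero => simp only [mul_zero, diag_zero]
  | add P Q hP hQ => rw [mul_add, diag_add, hP, hQ, diag_add, mul_add]
  | single x c =>
    have key : r + x.1 - (s + x.2) = t ↔ x.1 - x.2 = t - (r - s) := by omega
    simp only [mono, AddMonoidAlgebra.single_mul_single, diag_single, Prod.fst_add, Prod.snd_add,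
      key]
    split_ifs <;> simp

lemma diag_F_mul (r : ℤ) (Q : L2) (t : ℤ) : diag (F r * Q) t = F r * diag Q t := by
  have h (i : ℤ) : diag (mono i i * Q) t = mono i i * diag Q t := by
    rw [diag_mono_mul, sub_self, sub_zero]
  rw [F]
  split_ifs <;> simp only [neg_mul, Finset.sum_mul, diag_neg, diag_sum, h]

lemma diag_F (r t : ℤ) : diag (F r) t = if t = 0 then F r else 0 := by
  rw [← mul_one (F r), diag_F_mul, AddMonoidAlgebra.one_def, diag_single]
  simp [eq_comm]

-- `AddMonoidAlgebra.lift ℤ ℤ (ℤ × ℤ) 1` is evaluation at `u₁ = u₂ = 1`.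
lemma lift_one_F (r : ℤ) : AddMonoidAlgebra.lift ℤ ℤ (ℤ × ℤ) 1 (F r) = r := by
  rw [F]
  split_ifs <;> simp [mono]
  all_goals omega

lemma F_ne_zero {r : ℤ} (hr : r ≠ 0) : F r ≠ 0 :=
  fun h => hr (by simpa [h] using (lift_one_F r).symm)

lemma diag_delta_step {a b e c d : ℤ} {D₀ D₁ D₂ : L2} (ha : a ≠ 0)
    (hrec : F a * D₂ = (c • ((mono 1 0 - 1) * (mono 0 1 - 1)) * F b + 1) * (F a * D₁)
      + mono e e * F b * (D₁ - D₀))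
    (h₀ : ∀ t, d < t → diag D₀ t = 0) (h₁ : ∀ t, d < t → diag D₁ t = 0) :
    (∀ t, d + 1 < t → diag D₂ t = 0) ∧
      diag D₂ (d + 1) = -(c • (mono 1 0 * F b * diag D₁ d)) := by
  have expand : F a * D₂ = c • (mono 1 1 * (F b * (F a * D₁)) - mono 1 0 * (F b * (F a * D₁))
      - mono 0 1 * (F b * (F a * D₁)) + F b * (F a * D₁)) + F a * D₁
      + mono e e * (F b * (D₁ - D₀)) := by
    rw [hrec, show mono 1 1 = mono 1 0 * mono 0 1 by rw [mono_mul_mono]; rfl]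
    simp only [zsmul_eq_mul]
    ring
  have hdiag (t : ℤ) : F a * diag D₂ t = F a * (c • (mono 1 1 * (F b * diag D₁ t)
      - mono 1 0 * (F b * diag D₁ (t - 1)) - mono 0 1 * (F b * diag D₁ (t + 1))
      + F b * diag D₁ t) + diag D₁ t) + mono e e * (F b * (diag D₁ t - diag D₀ t)) := by
    rw [← diag_F_mul, expand]
    simp only [diag_add, diag_sub, diag_zsmul, diag_mono_mul, diag_F_mul, sub_self, sub_zero,
      zero_sub, sub_neg_eq_add]
    ring
  have cancel {X Y : L2} : F a * X = F a * Y → X = Y := mul_left_cancel₀ (F_ne_zero ha)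
  refine ⟨fun t ht => cancel ?_, cancel ?_⟩
  · rw [hdiag, h₁ t (by omega), h₁ (t - 1) (by omega), h₁ (t + 1) (by omega), h₀ t (by omega)]
    simp
  · rw [hdiag, h₁ (d + 1) (by omega), h₁ (d + 1 + 1) (by omega), h₀ (d + 1) (by omega),
      add_sub_cancel_right]
    simp only [zsmul_eq_mul]
    ring

theorem diag_Delta_top_general (n : ℕ) (hn : 1 ≤ n) (p q : ℕ → ℤ)
    (hp : ∀ i, 1 ≤ i → i ≤ n → p i ≠ 0)
    (Δ : ℕ → L2) (h0 : Δ 0 = 0) (h1 : Δ 1 = F (p 1))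
    (hrec : ∀ k, 2 ≤ k → k ≤ n →
      F (p (k - 1)) * Δ k =
        (q (k - 1) • ((mono 1 0 - 1) * (mono 0 1 - 1)) * F (p k) + 1) *
            (F (p (k - 1)) * Δ (k - 1))
          + mono (p (k - 1)) (p (k - 1)) * F (p k) * (Δ (k - 1) - Δ (k - 2))) :
    (∀ t : ℤ, (n : ℤ) - 1 < t → diag (Δ n) t = 0) ∧
    diag (Δ n) ((n : ℤ) - 1) =
      (∏ i ∈ Icc 1 (n - 1), q i) •
        ((-(mono 1 0)) ^ (n - 1) * ∏ i ∈ Icc 1 n, F (p i)) := by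
  have key (j : ℕ) (hj : j + 1 ≤ n) :
      (∀ t : ℤ, j < t → diag (Δ j) t = 0 ∧ diag (Δ (j + 1)) t = 0) ∧
      diag (Δ (j + 1)) j =
        (∏ i ∈ Icc 1 j, q i) • ((-(mono 1 0)) ^ j * ∏ i ∈ Icc 1 (j + 1), F (p i)) := by
    induction j with
    | zero =>
      refine ⟨fun t ht => ?_, by simp [h1, diag_F]⟩
      rw [Nat.cast_zero] at ht
      simp [h0, h1, diag_zero, diag_F, ht.ne']
    | succ j ih =>
      obtain ⟨hvan, htop⟩ := ih (by omega)
      obtain ⟨hvan', htop'⟩ := diag_delta_step (hp (j + 1) (by omega) (by omega))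
        (hrec (j + 2) (by omega) hj) (fun t ht => (hvan t ht).1) (fun t ht => (hvan t ht).2)
      rw [show j + 2 - 1 = j + 1 from rfl] at htop'
      refine ⟨fun t ht => ⟨(hvan t (by omega)).2, hvan' t (by push_cast at ht; omega)⟩, ?_⟩
      rw [Nat.cast_succ, htop', htop, prod_Icc_succ_top (by omega) q,
        prod_Icc_succ_top (by omega : 1 ≤ j + 2) (fun i => F (p i))]
      simp only [zsmul_eq_mul, Int.cast_mul]
      ring
  obtain ⟨hvan, htop⟩ := key (n - 1) (by omega)
  rw [Nat.sub_add_cancel hn] at hvan htop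
  rw [Nat.cast_sub hn, Nat.cast_one] at hvan htop
  exact ⟨fun t ht => (hvan t ht).2, htop⟩

/-- For the recursively defined `Δ_k` (recursion stated with denominators cleared:
`F_{p_{k-1}} · Δ_k = (q_{k-1}(u₁-1)(u₂-1)F_{p_k}+1) · F_{p_{k-1}} · Δ_{k-1}
  + (u₁u₂)^{p_{k-1}} F_{p_k} (Δ_{k-1} - Δ_{k-2})`),
the diagonal parts `Δ_n^[t]` vanish for `t > n-1`, and
`Δ_n^[n-1] = (∏_{i=1}^{n-1} q_i) · (-u₁)^{n-1} · ∏_{i=1}^{n} F_{p_i}`. -/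
theorem diag_Delta_top (n : ℕ) (hn : 1 ≤ n) (p q : ℕ → ℤ)
    (hp : ∀ i, 1 ≤ i → i ≤ n → p i ≠ 0) (hq : ∀ i, 1 ≤ i → i ≤ n - 1 → q i ≠ 0)
    (Δ : ℕ → L2) (h0 : Δ 0 = 0) (h1 : Δ 1 = F (p 1))
    (hrec : ∀ k, 2 ≤ k → k ≤ n →
      F (p (k - 1)) * Δ k =
        (q (k - 1) • ((mono 1 0 - 1) * (mono 0 1 - 1)) * F (p k) + 1) *
            (F (p (k - 1)) * Δ (k - 1))
          + mono (p (k - 1)) (p (k - 1)) * F (p k) * (Δ (k - 1) - Δ (k - 2))) :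
    (∀ t : ℤ, (n : ℤ) - 1 < t → diag (Δ n) t = 0) ∧
    diag (Δ n) ((n : ℤ) - 1) =
      (∏ i ∈ Icc 1 (n - 1), q i) •
        ((-(mono 1 0)) ^ (n - 1) * ∏ i ∈ Icc 1 n, F (p i)) :=
  diag_Delta_top_general n hn p q hp Δ h0 h1 hrec
end
end

section
/- Let n ≥ 2 and let c < 0 be a real number. Let A_n(c) be the n×n real symmetric tridiagonal matrix with A_{11} = c, A_{ii} = 2 for 2 ≤ i ≤ n, off-diagonal entries A_{i,i+1} = A_{i+1,i} = -1, and all other entries 0. Then the signature of A_n(c) equals n - 2. -/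
noncomputable section

/-- The `n×n` symmetric tridiagonal matrix with `(1,1)`-entry `c`, remaining diagonal
entries `2`, off-diagonal (adjacent) entries `-1`, and all other entries `0`. -/
def A (n : ℕ) (c : ℝ) : Matrix (Fin n) (Fin n) ℝ := fun i j =>
  if i = j then (if (i : ℕ) = 0 then c else 2)
  else if (i : ℕ) + 1 = (j : ℕ) ∨ (j : ℕ) + 1 = (i : ℕ) then -1 else 0

/-!
Putting `xₙ = 0`, the quadratic form of `A n c` is `(c - 1) x₀² + ∑_{i<n} (xᵢ - xᵢ₊₁)²`.
It takes the value `c < 0` at `e₀` and is positive definite on the hyperplane `x₀ = 0`, so by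
Sylvester's law of inertia (`sigPos`, `sigNeg`) it has exactly `n - 1` positive and one negative
direction. The spectral theorem turns these into counts of positive and negative eigenvalues.
-/

open Matrix Finset QuadraticMap QuadraticForm

lemma Matrix.toQuadraticForm'_apply {R ι : Type*} [CommRing R] [Fintype ι] [DecidableEq ι]
    (M : Matrix ι ι R) (x : ι → R) : M.toQuadraticForm' x = x ⬝ᵥ M *ᵥ x := by
  simp [Matrix.toQuadraticForm', toLinearMap₂'_apply']

theorem Matrix.IsHermitian.toQuadraticForm'_equivalent_weightedSumSquares {ι : Type*}
    [Fintype ι] [DecidableEq ι] {M : Matrix ι ι ℝ} (hM : M.IsHermitian) :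
    M.toQuadraticForm'.Equivalent (weightedSumSquares ℝ hM.eigenvalues) := by
  set U : Matrix ι ι ℝ := (hM.eigenvectorUnitary : Matrix ι ι ℝ)
  have hspectral : M = U * diagonal hM.eigenvalues * Uᵀ := by
    conv_lhs => rw [hM.spectral_theorem]
    simp [Unitary.conjStarAlgAut_apply, U, star_eq_conjTranspose]
  refine ⟨{ toLinearEquiv := UnitaryGroup.toLinearEquiv hM.eigenvectorUnitary⁻¹,
            map_app' := fun x => ?_ }⟩
  rw [toQuadraticForm'_apply]
  conv_rhs =>
    rw [hspectral, ← mulVec_mulVec, ← mulVec_mulVec, dotProduct_mulVec, ← mulVec_transpose]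
  simp [UnitaryGroup.toLinearEquiv, UnitaryGroup.toLin', dotProduct, mulVec_diagonal, U,
    star_eq_conjTranspose, mul_left_comm]

lemma Matrix.IsHermitian.sigPos_toQuadraticForm' {ι : Type*} [Fintype ι] [DecidableEq ι]
    {M : Matrix ι ι ℝ} (hM : M.IsHermitian) :
    sigPos M.toQuadraticForm' = #{i | 0 < hM.eigenvalues i} := by
  rw [sigPos_of_equiv_weightedSumSquares hM.toQuadraticForm'_equivalent_weightedSumSquares,
    ← Set.ncard_coe_finset]
  simp

lemma Matrix.IsHermitian.sigNeg_toQuadraticForm' {ι : Type*} [Fintype ι] [DecidableEq ι]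
    {M : Matrix ι ι ℝ} (hM : M.IsHermitian) :
    sigNeg M.toQuadraticForm' = #{i | hM.eigenvalues i < 0} := by
  rw [sigNeg_of_equiv_weightedSumSquares hM.toQuadraticForm'_equivalent_weightedSumSquares,
    ← Set.ncard_coe_finset]
  simp

variable {n : ℕ}

lemma sum_range_ite_eq_of_forall_le {M : Type*} [AddCommMonoid M] {f : ℕ → M}
    (hf : ∀ m, n ≤ m → f m = 0) (m : ℕ) :
    ∑ j ∈ range n, (if m = j then f j else 0) = f m := by
  rw [sum_ite_eq]
  split_ifs with hm
  · rfl
  · exact (hf m (by simpa using hm)).symm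

lemma sum_range_tridiag_eq_sum_sq_sub {X : ℕ → ℝ} (hX : ∀ m, n ≤ m → X m = 0) (c : ℝ) :
    ∑ i ∈ range n, (if i = 0 then c else 2) * X i ^ 2 - 2 * ∑ i ∈ range n, X i * X (i + 1) =
      (c - 1) * X 0 ^ 2 + ∑ i ∈ range n, (X i - X (i + 1)) ^ 2 := by
  have hdiag : ∑ i ∈ range n, (if i = 0 then c else 2) * X i ^ 2 =
      (c - 2) * X 0 ^ 2 + 2 * ∑ i ∈ range n, X i ^ 2 := by
    have hsq : ∀ m, n ≤ m → X m ^ 2 = 0 := fun m hm => by simp [hX m hm]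
    rw [← sum_range_ite_eq_of_forall_le hsq 0, mul_sum, mul_sum, ← sum_add_distrib]
    refine sum_congr rfl fun i _ => ?_
    rcases eq_or_ne i 0 with rfl | hi
    · simp only [if_true]; ring
    · simp only [if_neg hi, if_neg (Ne.symm hi)]; ring
  have hshift : ∑ i ∈ range n, X (i + 1) ^ 2 = ∑ i ∈ range n, X i ^ 2 - X 0 ^ 2 := by
    have := (sum_range_succ' (fun i => X i ^ 2) n).symm.trans (sum_range_succ _ n)
    rw [hX n le_rfl] at this
    linarith
  rw [hdiag]
  simp only [sub_sq, sum_add_distrib, sum_sub_distrib, hshift, mul_assoc, ← mul_sum]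
  ring

lemma eq_zero_of_sum_sq_sub_eq_zero {X : ℕ → ℝ} (h0 : X 0 = 0)
    (h : ∑ i ∈ range n, (X i - X (i + 1)) ^ 2 = 0) : ∀ m ≤ n, X m = 0 := by
  have hstep : ∀ i < n, X i = X (i + 1) := fun i hi => by
    have := (sum_eq_zero_iff_of_nonneg fun i _ => sq_nonneg (X i - X (i + 1))).mp h i
      (mem_range.mpr hi)
    linarith [pow_eq_zero_iff two_ne_zero |>.mp this]
  intro m hm
  induction m with
  | zero => exact h0
  | succ m ih => rw [← hstep m (by omega), ih (by omega)]

@[simp] lemma extend_finVal_apply {α : Type*} [Zero α] (x : Fin n → α) (i : Fin n) :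
    Function.extend Fin.val x 0 (i : ℕ) = x i :=
  Fin.val_injective.extend_apply _ _ _

lemma extend_finVal_of_le {α : Type*} [Zero α] (x : Fin n → α) {m : ℕ} (hm : n ≤ m) :
    Function.extend Fin.val x 0 m = 0 :=
  Function.extend_apply' _ _ _ fun ⟨i, hi⟩ => by omega

lemma dotProduct_A_mulVec_eq_sum_range (c : ℝ) (x : Fin n → ℝ) :
    let X := Function.extend Fin.val x 0
    x ⬝ᵥ A n c *ᵥ x =
      ∑ i ∈ range n, (if i = 0 then c else 2) * X i ^ 2 - 2 * ∑ i ∈ range n, X i * X (i + 1) := by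
  intro X
  have hX : ∀ m, n ≤ m → X m = 0 := fun m hm => extend_finVal_of_le x hm
  set F : ℕ → ℕ → ℝ := fun i j => (if i = j then (if i = 0 then c else 2) * X i ^ 2 else 0)
        - X i * (if i + 1 = j then X j else 0) - X j * (if j + 1 = i then X i else 0)
  have hentry : ∀ i j : Fin n, x i * (A n c i j * x j) = F i j := by
    intro i j
    obtain rfl | hij := eq_or_ne i j
    · simp only [A, F, X, extend_finVal_apply]
      split_ifs <;> first | omega | ring
    · simp only [A, F, X, extend_finVal_apply, if_neg hij, if_neg (Fin.val_ne_of_ne hij)]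
      split_ifs <;> first | omega | ring
  calc x ⬝ᵥ A n c *ᵥ x = ∑ i ∈ range n, ∑ j ∈ range n, F i j := by
        simp only [dotProduct, mulVec, mul_sum, hentry]
        rw [← Fin.sum_univ_eq_sum_range]
        simp only [Fin.sum_univ_eq_sum_range (F _)]
    _ = _ := by
        simp only [F, sum_sub_distrib, ← mul_sum, sum_range_ite_eq_of_forall_le hX, sum_ite_eq]
        rw [sum_comm]
        simp only [← mul_sum, sum_range_ite_eq_of_forall_le hX, sum_ite_mem, inter_self]
        ring

/-- `Function.extend Fin.val x 0` is `x` extended by zero to `ℕ`, so the summand `i = n - 1` is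
`x (n - 1) ^ 2`. -/
lemma dotProduct_A_mulVec (c : ℝ) (x : Fin n → ℝ) :
    x ⬝ᵥ A n c *ᵥ x = (c - 1) * Function.extend Fin.val x 0 0 ^ 2 +
      ∑ i ∈ range n, (Function.extend Fin.val x 0 i - Function.extend Fin.val x 0 (i + 1)) ^ 2 :=
  (dotProduct_A_mulVec_eq_sum_range c x).trans
    (sum_range_tridiag_eq_sum_sq_sub (fun _ hm => extend_finVal_of_le x hm) c)

lemma A_toQuadraticForm'_single_zero (hn : 0 < n) (c : ℝ) :
    (A n c).toQuadraticForm' (Pi.single ⟨0, hn⟩ 1) = c := by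
  simp [toQuadraticForm'_apply, A]

lemma one_le_sigNeg_A (hn : 0 < n) {c : ℝ} (hc : c < 0) :
    1 ≤ sigNeg (A n c).toQuadraticForm' := by
  have he : (Pi.single ⟨0, hn⟩ 1 : Fin n → ℝ) ≠ 0 := by simp
  calc 1 = Module.finrank ℝ (ℝ ∙ (Pi.single ⟨0, hn⟩ 1 : Fin n → ℝ)) :=
        (finrank_span_singleton he).symm
    _ ≤ _ := le_sigNeg_of_negDef _ ?_
  rintro ⟨v, hv⟩ hv0
  obtain ⟨t, rfl⟩ := Submodule.mem_span_singleton.mp hv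
  have ht : t ≠ 0 := by rintro rfl; simp at hv0
  simp only [restrict_apply, _root_.neg_apply, QuadraticMap.map_smul,
    A_toQuadraticForm'_single_zero, smul_eq_mul]
  nlinarith [mul_self_pos.mpr ht]

lemma A_toQuadraticForm'_restrict_posDef (hn : 0 < n) (c : ℝ) :
    ((A n c).toQuadraticForm'.restrict (Pi.spanSubset ℝ {i | i ≠ ⟨0, hn⟩})).PosDef := by
  rintro ⟨x, hx⟩ hx0
  have hx00 : x ⟨0, hn⟩ = 0 := Pi.mem_spanSubset_iff.mp hx _ (by simp)
  have hX0 : Function.extend Fin.val x 0 0 = 0 := by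
    simpa using extend_finVal_apply x ⟨0, hn⟩ |>.trans hx00
  simp only [restrict_apply, toQuadraticForm'_apply, dotProduct_A_mulVec, hX0, ne_eq,
    OfNat.ofNat_ne_zero, not_false_eq_true, zero_pow, mul_zero, zero_add]
  refine lt_of_le_of_ne (by positivity) fun h => hx0 ?_
  have := eq_zero_of_sum_sq_sub_eq_zero hX0 (by simpa using h.symm)
  ext i
  simpa using this i i.isLt.le

lemma pred_le_sigPos_A (hn : 0 < n) (c : ℝ) : n - 1 ≤ sigPos (A n c).toQuadraticForm' := by
  have := le_sigPos_of_posDef _ (A_toQuadraticForm'_restrict_posDef hn c)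
  rwa [Pi.dim_spanSubset, ← Set.compl_ofPred, Set.ncard_compl, Set.ofPred_eq_eq_singleton,
    Set.ncard_singleton, Nat.card_eq_fintype_card, Fintype.card_fin] at this

/-- For `n ≥ 2` and `c < 0`, the signature of `A_n(c)` (number of positive
eigenvalues minus number of negative eigenvalues) equals `n - 2`. -/
theorem A_signature_neg (n : ℕ) (hn : 2 ≤ n) (c : ℝ) (hc : c < 0) :
    ∀ hA : (A n c).IsHermitian,
      ((Finset.univ.filter fun i => 0 < hA.eigenvalues i).card : ℤ) -
          ((Finset.univ.filter fun i => hA.eigenvalues i < 0).card : ℤ) = (n : ℤ) - 2 := by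
  intro hA
  have hsum := sigPos_add_sigNeg_add_radical (Q := (A n c).toQuadraticForm')
  rw [Module.finrank_fin_fun] at hsum
  have hpos := pred_le_sigPos_A (by omega : 0 < n) c
  have hneg := one_le_sigNeg_A (by omega : 0 < n) hc
  rw [← hA.sigPos_toQuadraticForm', ← hA.sigNeg_toQuadraticForm']
  omega
end
end

section
/- For odd positive integers q' and k, the continued fraction [2w; -2, 2, -2, 2, ..., -2, 2] with first entry 2w (w = (q'+1)/2) followed by n-1 alternating pairs (-2, 2) (total 2n-1 entries, k = 2n-1) evaluates to (q'k + 1)/k. -/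
/-- Evaluation of the continued fraction `[a₁; a₂, …, a_m] = a₁ + 1/(a₂ + 1/(⋯ + 1/a_m))`
in `ℚ`, with the convention that the empty list evaluates to `0`. -/
def cfrac : List ℚ → ℚ
  | [] => 0
  | a :: rest => if rest.isEmpty then a else a + 1 / cfrac rest

lemma cfrac_tail (m : ℕ) (hm : 1 ≤ m) :
    cfrac ((List.replicate m [(-2 : ℚ), 2]).flatten) = -(2 * m + 1) / (2 * m) := by
  induction m with
  | zero => omega
  | succ m ih =>
    rcases Nat.eq_zero_or_pos m with h | h
    · subst h
      norm_num [cfrac, List.replicate]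
    · have hrest := ih h
      have hm1 : (1:ℚ) ≤ (m:ℚ) := by exact_mod_cast h
      have hne : ((List.replicate m [(-2 : ℚ), 2]).flatten).isEmpty = false := by
        cases m with
        | zero => omega
        | succ k => simp [List.replicate]
      rw [List.replicate_succ]
      show cfrac ((-2 : ℚ) :: (2 : ℚ) :: (List.replicate m [(-2 : ℚ), 2]).flatten) = _
      rw [cfrac, cfrac, hrest]
      simp only [hne, List.isEmpty_cons, if_false]
      have h1 : (2:ℚ) * m ≠ 0 := by positivity
      have h2 : (2:ℚ) * m + 1 ≠ 0 := by positivity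
      have h2' : (-1:ℚ) - ↑m * 2 ≠ 0 := by intro hh; nlinarith
      have h3 : (2:ℚ) + 1 / (-(2 * ↑m + 1) / (2 * ↑m)) = (2*m+2)/(2*m+1) := by
        rw [one_div_div, div_neg, ← sub_eq_add_neg]
        field_simp
        ring
      rw [h3]
      have h4 : (2:ℚ)*m+2 ≠ 0 := by positivity
      have : (2:ℚ) * (↑m + 1) ≠ 0 := by positivity
      push_cast
      field_simp
      ring

/-- The continued fraction `[2w; -2, 2, -2, 2, …, -2, 2]` with first entry `2w`
followed by `n-1` alternating pairs `(-2, 2)` (total `2n-1` entries) equals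
`(q'k + 1)/k`, where `q' = 2w-1` and `k = 2n-1` are odd positive integers. -/
theorem cfrac_two_bridge' (n w : ℕ) (hn : 1 ≤ n) (hw : 1 ≤ w) :
    cfrac ((2 * (w : ℚ)) :: (List.replicate (n - 1) [(-2 : ℚ), 2]).flatten) =
      ((2 * (w : ℚ) - 1) * (2 * (n : ℚ) - 1) + 1) / (2 * (n : ℚ) - 1) := by
  obtain ⟨m, rfl⟩ : ∃ m, n = m + 1 := ⟨n - 1, by omega⟩
  simp only [Nat.add_sub_cancel]
  rcases Nat.eq_zero_or_pos m with h | h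
  · subst h
    norm_num [cfrac]
  · have hne : ((List.replicate m [(-2 : ℚ), 2]).flatten).isEmpty = false := by
      cases m with
      | zero => omega
      | succ k => simp [List.replicate]
    rw [cfrac, cfrac_tail m h]
    simp only [hne, if_false]
    have hm1 : (1:ℚ) ≤ (m:ℚ) := by exact_mod_cast h
    have h1 : (2:ℚ) * m ≠ 0 := by positivity
    have h2 : (2:ℚ) * m + 1 ≠ 0 := by positivity
    have h3 : (2:ℚ) * (m+1) - 1 ≠ 0 := by nlinarith
    have h2' : (-1:ℚ) - ↑m * 2 ≠ 0 := by intro hh; nlinarith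
    push_cast
    rw [one_div_div, div_neg, ← sub_eq_add_neg]
    field_simp
    ring
end

section
/- Let w ≥ 1, n ≥ 1 and set Q(u₁,u₂) = Σ_{0≤i≤w-1, 0≤j≤n-1} u₁^{i+j}u₂^{i-j+n-1} − Σ_{1≤i≤w-1, 0≤j≤n-2} u₁^{i+j}u₂^{i-j+n-2}. For each fixed integer a, consider the sequence of coefficients of u₁^a u₂^b in Q as b ranges over ℤ. Then the nonzero coefficients in this sequence alternate in sign. -/
/-!
In the column of `u₁^a`, the first sum of `Q` contributes `+1` at `b = 2i - a + n - 1` and the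
second sum `-1` at `b = 2i - a + n - 2`, each exponent being hit at most once. So the nonzero
coefficients are `±1`, their sign is fixed by the parity of `a + b`, and between two exponents of
the same sign there is one of the opposite sign: shift `(i, j)` to `(i + 1, j - 1)`, or back.
-/

open Finset

noncomputable section

theorem AddMonoidAlgebra.coeff_sum_single_one_of_injOn {R G ι : Type*} [Semiring R]
    [DecidableEq G] (s : Finset ι) {f : ι → G} (hf : Set.InjOn f s) (g : G) :
    (∑ x ∈ s, single (f x) (1 : R)).coeff g = if g ∈ s.image f then 1 else 0 := by
  rw [← Finset.sum_image (f := fun g => single g (1 : R)) hf, coeff_sum, Finset.sum_apply']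
  simp only [coeff_single, Finsupp.single_apply, Finset.sum_ite_eq']

def signedIndicator (p q : ℤ → Prop) [DecidablePred p] [DecidablePred q] (b : ℤ) : ℤ :=
  (if p b then 1 else 0) - (if q b then 1 else 0)

section signedIndicator

variable {p q : ℤ → Prop} [DecidablePred p] [DecidablePred q]

theorem signedIndicator_of_left (hpq : ∀ b, p b → ¬ q b) {b : ℤ} (hb : p b) :
    signedIndicator p q b = 1 := by
  simp [signedIndicator, hb, hpq b hb]

theorem signedIndicator_of_right (hpq : ∀ b, p b → ¬ q b) {b : ℤ} (hb : q b) :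
    signedIndicator p q b = -1 := by
  have hpb : ¬ p b := fun h => hpq b h hb
  simp [signedIndicator, hb, hpb]

theorem signedIndicator_mul_neg_of_consecutive (hpq : ∀ b, p b → ¬ q b)
    (hp : ∀ b₁ b₂, b₁ < b₂ → p b₁ → p b₂ → ∃ b, b₁ < b ∧ b < b₂ ∧ q b)
    (hq : ∀ b₁ b₂, b₁ < b₂ → q b₁ → q b₂ → ∃ b, b₁ < b ∧ b < b₂ ∧ p b)
    {b₁ b₂ : ℤ} (hlt : b₁ < b₂) (h₁ : signedIndicator p q b₁ ≠ 0)
    (h₂ : signedIndicator p q b₂ ≠ 0)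
    (hgap : ∀ b, b₁ < b → b < b₂ → signedIndicator p q b = 0) :
    signedIndicator p q b₁ * signedIndicator p q b₂ < 0 := by
  have hsupp : ∀ b, signedIndicator p q b ≠ 0 → p b ∨ q b := by
    intro b hb
    by_contra! h
    simp [signedIndicator, h.1, h.2] at hb
  rcases hsupp b₁ h₁ with hp₁ | hq₁ <;> rcases hsupp b₂ h₂ with hp₂ | hq₂
  · obtain ⟨b, hb₁, hb₂, hqb⟩ := hp b₁ b₂ hlt hp₁ hp₂
    simpa [signedIndicator_of_right hpq hqb] using hgap b hb₁ hb₂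
  · simp [signedIndicator_of_left hpq hp₁, signedIndicator_of_right hpq hq₂]
  · simp [signedIndicator_of_right hpq hq₁, signedIndicator_of_left hpq hp₂]
  · obtain ⟨b, hb₁, hb₂, hpb⟩ := hq b₁ b₂ hlt hq₁ hq₂
    simpa [signedIndicator_of_left hpq hpb] using hgap b hb₁ hb₂

end signedIndicator

def posExponents (w n : ℕ) : Finset (ℤ × ℤ) :=
  (range w ×ˢ range n).image fun ij => ((ij.1 : ℤ) + ij.2, (ij.1 : ℤ) - ij.2 + n - 1)

def negExponents (w n : ℕ) : Finset (ℤ × ℤ) :=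
  (Icc 1 (w - 1) ×ˢ range (n - 1)).image fun ij => ((ij.1 : ℤ) + ij.2, (ij.1 : ℤ) - ij.2 + n - 2)

theorem injOn_exponents (s : Finset (ℕ × ℕ)) (k c : ℤ) :
    Set.InjOn (fun ij : ℕ × ℕ => ((ij.1 : ℤ) + ij.2, (ij.1 : ℤ) - ij.2 + k - c)) s := by
  intro x _ y _ h
  simp only [Prod.mk.injEq] at h
  ext <;> omega

theorem coeff_alexander_eq_signedIndicator (w n : ℕ) (a b : ℤ) :
    ((∑ i ∈ range w, ∑ j ∈ range n, mono ((i : ℤ) + j) ((i : ℤ) - j + n - 1))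
        - ∑ i ∈ Icc 1 (w - 1), ∑ j ∈ range (n - 1),
            mono ((i : ℤ) + j) ((i : ℤ) - j + n - 2)).coeff (a, b) =
      signedIndicator (fun b => (a, b) ∈ posExponents w n)
        (fun b => (a, b) ∈ negExponents w n) b := by
  rw [AddMonoidAlgebra.coeff_sub, Finsupp.sub_apply, ← sum_product', ← sum_product']
  simp only [mono]
  rw [AddMonoidAlgebra.coeff_sum_single_one_of_injOn _ (injOn_exponents _ _ _),
    AddMonoidAlgebra.coeff_sum_single_one_of_injOn _ (injOn_exponents _ _ _)]
  rfl

-- The monomials of the two parts have `a + b ≡ n - 1` and `a + b ≡ n` mod 2 respectively.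
theorem notMem_negExponents_of_mem_posExponents (w n : ℕ) (t : ℤ × ℤ)
    (ht : t ∈ posExponents w n) : t ∉ negExponents w n := by
  simp only [posExponents, negExponents, mem_image, mem_product, mem_range, mem_Icc] at ht ⊢
  rintro ⟨⟨i', j'⟩, -, rfl⟩
  obtain ⟨⟨i, j⟩, -, h⟩ := ht
  simp only [Prod.mk.injEq] at h
  omega

theorem exists_negExponents_between (w n : ℕ) {a b₁ b₂ : ℤ} (hlt : b₁ < b₂)
    (h₁ : (a, b₁) ∈ posExponents w n) (h₂ : (a, b₂) ∈ posExponents w n) :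
    ∃ b, b₁ < b ∧ b < b₂ ∧ (a, b) ∈ negExponents w n := by
  simp only [posExponents, negExponents, mem_image, mem_product, mem_range, mem_Icc,
    Prod.mk.injEq] at h₁ h₂ ⊢
  obtain ⟨⟨i₁, j₁⟩, ⟨hi₁, hj₁⟩, ha₁, hb₁⟩ := h₁
  obtain ⟨⟨i₂, j₂⟩, ⟨hi₂, hj₂⟩, ha₂, hb₂⟩ := h₂
  exact ⟨b₁ + 1, by omega, by omega, ⟨i₁ + 1, j₁ - 1⟩, by omega, by push_cast; omega, by omega⟩

theorem exists_posExponents_between (w n : ℕ) {a b₁ b₂ : ℤ} (hlt : b₁ < b₂)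
    (h₁ : (a, b₁) ∈ negExponents w n) (h₂ : (a, b₂) ∈ negExponents w n) :
    ∃ b, b₁ < b ∧ b < b₂ ∧ (a, b) ∈ posExponents w n := by
  simp only [posExponents, negExponents, mem_image, mem_product, mem_range, mem_Icc,
    Prod.mk.injEq] at h₁ h₂ ⊢
  obtain ⟨⟨i₁, j₁⟩, ⟨⟨hi₁, hi₁'⟩, hj₁⟩, ha₁, hb₁⟩ := h₁
  obtain ⟨⟨i₂, j₂⟩, ⟨⟨hi₂, hi₂'⟩, hj₂⟩, ha₂, hb₂⟩ := h₂
  exact ⟨b₁ + 1, by omega, by omega, ⟨i₁, j₁⟩, by omega, by omega, by omega⟩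

theorem alternating_columns_general (w n : ℕ)
    (Q : L2)
    (hQ : Q = (∑ i ∈ range w, ∑ j ∈ range n, mono ((i : ℤ) + j) ((i : ℤ) - j + n - 1))
        - ∑ i ∈ Icc 1 (w - 1), ∑ j ∈ range (n - 1),
            mono ((i : ℤ) + j) ((i : ℤ) - j + n - 2)) :
    ∀ a b₁ b₂ : ℤ, b₁ < b₂ → Q.coeff (a, b₁) ≠ 0 → Q.coeff (a, b₂) ≠ 0 →
      (∀ b : ℤ, b₁ < b → b < b₂ → Q.coeff (a, b) = 0) →
      Q.coeff (a, b₁) * Q.coeff (a, b₂) < 0 := by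
  intro a b₁ b₂
  subst hQ
  simp only [coeff_alexander_eq_signedIndicator]
  exact signedIndicator_mul_neg_of_consecutive
    (fun b => notMem_negExponents_of_mem_posExponents w n (a, b))
    (fun _ _ => exists_negExponents_between w n) (fun _ _ => exists_posExponents_between w n)

/-- For `Q = Σ_{0≤i≤w-1, 0≤j≤n-1} u₁^{i+j}u₂^{i-j+n-1} − Σ_{1≤i≤w-1, 0≤j≤n-2} u₁^{i+j}u₂^{i-j+n-2}`,
in each column (fixed `u₁`-exponent `a`) the nonzero coefficients alternate in sign:
consecutive nonzero coefficients (with only zero coefficients in between) have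
opposite signs. -/
theorem alternating_columns (w n : ℕ) (hw : 1 ≤ w) (hn : 1 ≤ n)
    (Q : L2)
    (hQ : Q = (∑ i ∈ range w, ∑ j ∈ range n, mono ((i : ℤ) + j) ((i : ℤ) - j + n - 1))
        - ∑ i ∈ Icc 1 (w - 1), ∑ j ∈ range (n - 1),
            mono ((i : ℤ) + j) ((i : ℤ) - j + n - 2)) :
    ∀ a b₁ b₂ : ℤ, b₁ < b₂ → Q.coeff (a, b₁) ≠ 0 → Q.coeff (a, b₂) ≠ 0 →
      (∀ b : ℤ, b₁ < b → b < b₂ → Q.coeff (a, b) = 0) →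
      Q.coeff (a, b₁) * Q.coeff (a, b₂) < 0 :=
  alternating_columns_general w n Q hQ
end
end
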